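/- arXiv:1803.09925 — 5 statements merged into one kernel-verified Lean document; each statement's English description precedes it below -/
import Mathlib

section
/- Let L be a lattice with least element 0, and let a be an atom of L that is also a neutral element. Then an element x ∈ L is cancellable if and only if x ⊔ a is cancellable. -/
/-!
Say that `w` does not separate `y` and `z` if `w ⊔ y = w ⊔ z` and `w ⊓ y = w ⊓ z`.
Bounding elements by the median of `a, u, v` shows that a neutral `a` is cancellable and, since an
atom `a` lies below every `v` it is not disjoint from, that `(u ⊔ a) ⊓ v = (u ⊓ v) ⊔ (a ⊓ v)`.
If `x` is cancellable and `x ⊔ a` does not separate `y` and `z`, this distributive law shows that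
`x` does not separate `y ⊔ a` and `z ⊔ a`, and `a` does not separate `y` and `z`, so `y = z`.
Conversely, if `x` does not separate `y` and `z`, then `a ≤ y ↔ a ≤ z` (via `a ≤ x` or
`Disjoint a x`), so `a ⊓ y = a ⊓ z`, and the distributive law shows that `x ⊔ a` does not
separate them either.
-/

section

variable {L : Type*} [Lattice L]

def IsNeutral (a : L) : Prop :=
  ∀ y z : L, (a ⊔ y) ⊓ (y ⊔ z) ⊓ (z ⊔ a) = (a ⊓ y) ⊔ (y ⊓ z) ⊔ (z ⊓ a)

def IsCancellable (x : L) : Prop :=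
  ∀ y z : L, x ⊔ y = x ⊔ z → x ⊓ y = x ⊓ z → y = z

namespace IsNeutral

variable {a : L}

theorem le_median (ha : IsNeutral a) {w u v : L} (hau : w ≤ a ⊔ u) (huv : w ≤ u ⊔ v)
    (hva : w ≤ v ⊔ a) : w ≤ (a ⊓ u) ⊔ (u ⊓ v) ⊔ (v ⊓ a) :=
  ha u v ▸ le_inf (le_inf hau huv) hva

theorem isCancellable (ha : IsNeutral a) : IsCancellable a := by
  have key : ∀ y z : L, a ⊔ y = a ⊔ z → a ⊓ y = a ⊓ z → y ≤ z := by
    intro y z hsup hinf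
    have hy : y ≤ (a ⊓ y) ⊔ (y ⊓ z) ⊔ (z ⊓ a) :=
      ha.le_median le_sup_right le_sup_left (by rw [sup_comm z, ← hsup]; exact le_sup_right)
    exact hy.trans (sup_le (sup_le (hinf ▸ inf_le_right) inf_le_right) inf_le_left)
  exact fun y z hsup hinf => (key y z hsup hinf).antisymm (key z y hsup.symm hinf.symm)

theorem sup_inf_of_le (ha : IsNeutral a) {u v : L} (hav : a ≤ v) :
    (u ⊔ a) ⊓ v = (u ⊓ v) ⊔ a := by
  have h := ha u v
  rwa [sup_eq_left.mpr hav, inf_assoc, inf_eq_right.mpr (le_sup_right : v ≤ u ⊔ v),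
    sup_comm a u, inf_comm v a, inf_eq_left.mpr hav, sup_comm (a ⊓ u), sup_assoc,
    sup_eq_right.mpr (inf_le_left : a ⊓ u ≤ a)] at h

theorem le_of_le_sup_of_disjoint [OrderBot L] (ha : IsNeutral a) {u v : L} (hle : a ≤ u ⊔ v)
    (hav : Disjoint a v) : a ≤ u := by
  refine (ha.le_median le_sup_left hle le_sup_right).trans
    (sup_le (sup_le inf_le_right inf_le_left) ?_)
  rw [inf_comm, hav.eq_bot]
  exact bot_le

theorem sup_inf_of_disjoint [OrderBot L] (ha : IsNeutral a) {u v : L} (hav : Disjoint a v) :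
    (u ⊔ a) ⊓ v = u ⊓ v := by
  refine le_antisymm (le_inf ?_ inf_le_right) (inf_le_inf_right v le_sup_left)
  have hle := ha.le_median (w := (u ⊔ a) ⊓ v)
    (sup_comm u a ▸ inf_le_left : (u ⊔ a) ⊓ v ≤ a ⊔ u)
    (inf_le_right.trans le_sup_right) (inf_le_right.trans le_sup_left)
  rw [inf_comm v a, hav.eq_bot, sup_bot_eq] at hle
  exact hle.trans (sup_le inf_le_right inf_le_left)

end IsNeutral

section NeutralAtom

variable [OrderBot L] {a : L}

theorem IsNeutral.sup_inf_eq_of_isAtom (ha : IsNeutral a) (hatom : IsAtom a) (u v : L) :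
    (u ⊔ a) ⊓ v = (u ⊓ v) ⊔ (a ⊓ v) := by
  by_cases hav : a ≤ v
  · rw [ha.sup_inf_of_le hav, inf_eq_left.mpr hav]
  · have hdis := hatom.not_le_iff_disjoint.mp hav
    rw [ha.sup_inf_of_disjoint hdis, hdis.eq_bot, sup_bot_eq]

theorem IsNeutral.le_of_le_of_isAtom (ha : IsNeutral a) (hatom : IsAtom a) {x y z : L}
    (hsup : x ⊔ y = x ⊔ z) (hinf : x ⊓ y = x ⊓ z) (hay : a ≤ y) : a ≤ z := by
  by_cases hax : a ≤ x
  · exact (le_inf hax hay).trans (hinf ▸ inf_le_right)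
  · refine ha.le_of_le_sup_of_disjoint ?_ (hatom.not_le_iff_disjoint.mp hax)
    rw [sup_comm, ← hsup]
    exact hay.trans le_sup_right

theorem IsNeutral.inf_eq_inf_of_isAtom (ha : IsNeutral a) (hatom : IsAtom a) {x y z : L}
    (hsup : x ⊔ y = x ⊔ z) (hinf : x ⊓ y = x ⊓ z) : a ⊓ y = a ⊓ z := by
  by_cases hay : a ≤ y
  · rw [inf_eq_left.mpr hay, inf_eq_left.mpr (ha.le_of_le_of_isAtom hatom hsup hinf hay)]
  · have haz : ¬ a ≤ z := fun haz => hay (ha.le_of_le_of_isAtom hatom hsup.symm hinf.symm haz)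
    rw [(hatom.not_le_iff_disjoint.mp hay).eq_bot, (hatom.not_le_iff_disjoint.mp haz).eq_bot]

theorem IsCancellable.sup_of_isNeutral_of_isAtom {x : L} (hx : IsCancellable x)
    (ha : IsNeutral a) (hatom : IsAtom a) : IsCancellable (x ⊔ a) := by
  intro y z hsup hinf
  have hdist := ha.sup_inf_eq_of_isAtom hatom
  have inf_eq_of_le : ∀ {w : L}, w ≤ x ⊔ a → w ⊓ y = w ⊓ z := fun hw => by
    rw [← inf_eq_left.mpr hw, inf_assoc, inf_assoc, hinf]
  have hya : y ⊔ a = z ⊔ a := by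
    refine hx _ _ (by rw [← sup_assoc, ← sup_assoc, sup_right_comm, hsup, sup_right_comm]) ?_
    calc x ⊓ (y ⊔ a) = (y ⊓ x) ⊔ (a ⊓ x) := by rw [inf_comm, hdist]
      _ = (z ⊓ x) ⊔ (a ⊓ x) := by rw [inf_comm y, inf_eq_of_le le_sup_left, inf_comm x]
      _ = x ⊓ (z ⊔ a) := by rw [← hdist, inf_comm]
  exact ha.isCancellable y z (by rw [sup_comm, hya, sup_comm]) (inf_eq_of_le le_sup_right)

theorem IsCancellable.of_sup_of_isNeutral_of_isAtom {x : L} (hxa : IsCancellable (x ⊔ a))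
    (ha : IsNeutral a) (hatom : IsAtom a) : IsCancellable x := by
  intro y z hsup hinf
  refine hxa y z (by rw [sup_right_comm, hsup, sup_right_comm]) ?_
  have hdist := ha.sup_inf_eq_of_isAtom hatom
  rw [hdist, hdist, hinf, ha.inf_eq_inf_of_isAtom hatom hsup hinf]

end NeutralAtom

end

/-- Let `L` be a lattice with least element `0` and `a` an atom of `L` that is also
a neutral element.  Then `x` is cancellable iff `x ⊔ a` is cancellable. -/
theorem cancellable_iff_join_atom {L : Type*} [Lattice L] [OrderBot L] (a : L)
    (hatom : IsAtom a)
    (hneutral : ∀ y z : L,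
      (a ⊔ y) ⊓ (y ⊔ z) ⊓ (z ⊔ a) = (a ⊓ y) ⊔ (y ⊓ z) ⊔ (z ⊓ a))
    (x : L) :
    (∀ y z : L, x ⊔ y = x ⊔ z → x ⊓ y = x ⊓ z → y = z) ↔
      (∀ y z : L, (x ⊔ a) ⊔ y = (x ⊔ a) ⊔ z → (x ⊔ a) ⊓ y = (x ⊔ a) ⊓ z → y = z) :=
  ⟨fun hx => IsCancellable.sup_of_isNeutral_of_isAtom hx hneutral hatom,
    fun hxa => IsCancellable.of_sup_of_isNeutral_of_isAtom hxa hneutral hatom⟩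
end

section
/- Let x be a modular element of a lattice L that is not cancellable, and let y, z be distinct elements of L with x ⊔ y = x ⊔ z and x ⊓ y = x ⊓ z. Then there exists x' ∈ L with x' ≤ x, x' ⊔ y = x' ⊔ z, x' ⊓ y = x' ⊓ z, and y ⊔ z = x' ⊔ y. -/
/-!
Take `x' = x ⊓ (y ⊔ z)`. Since `x ⊔ y = x ⊔ z`, the element `y ⊔ z` lies between `y` and
`x ⊔ y`, so modularity of `x` on that interval gives `x' ⊔ y = (x ⊔ y) ⊓ (y ⊔ z) = y ⊔ z`;
symmetrically `x' ⊔ z = y ⊔ z`. Meeting with `x'` changes nothing below `y ⊔ z`, so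
`x' ⊓ y = x ⊓ y = x ⊓ z = x' ⊓ z`.
-/

section Lattice

variable {L : Type*} [Lattice L]

theorem sup_le_of_sup_eq_sup {x y z : L} (h : x ⊔ y = x ⊔ z) : y ⊔ z ≤ x ⊔ y :=
  sup_le le_sup_right (h ▸ le_sup_right)

theorem inf_inf_eq_inf_of_le {a w y : L} (hyw : y ≤ w) : a ⊓ w ⊓ y = a ⊓ y := by
  rw [inf_assoc, inf_of_le_right hyw]

theorem inf_sup_eq_of_le_of_le_sup {x y w : L}
    (hmod : ∀ y z : L, y ≤ z → (x ⊔ y) ⊓ z = (x ⊓ z) ⊔ y) (hyw : y ≤ w) (hw : w ≤ x ⊔ y) :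
    x ⊓ w ⊔ y = w := by
  rw [← hmod y w hyw, inf_of_le_right hw]

end Lattice

theorem modular_non_cancellable_general {L : Type*} [Lattice L] (x : L)
    (hmod : ∀ y z : L, y ≤ z → (x ⊔ y) ⊓ z = (x ⊓ z) ⊔ y)
    (y z : L) (hj : x ⊔ y = x ⊔ z) (hm : x ⊓ y = x ⊓ z) :
    ∃ x' : L, x' ≤ x ∧ x' ⊔ y = x' ⊔ z ∧ x' ⊓ y = x' ⊓ z ∧ y ⊔ z = x' ⊔ y := by
  have hy : x ⊓ (y ⊔ z) ⊔ y = y ⊔ z :=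
    inf_sup_eq_of_le_of_le_sup hmod le_sup_left (sup_le_of_sup_eq_sup hj)
  have hz : x ⊓ (y ⊔ z) ⊔ z = y ⊔ z := by
    refine inf_sup_eq_of_le_of_le_sup hmod le_sup_right ?_
    rw [sup_comm y]
    exact sup_le_of_sup_eq_sup hj.symm
  refine ⟨x ⊓ (y ⊔ z), inf_le_left, hy.trans hz.symm, ?_, hy.symm⟩
  rw [inf_inf_eq_inf_of_le le_sup_left, inf_inf_eq_inf_of_le le_sup_right, hm]

/-- For a modular non-cancellable element `x` and distinct `y, z` witnessing
non-cancellability, there is `x' ≤ x` with `x' ⊔ y = x' ⊔ z`, `x' ⊓ y = x' ⊓ z`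
and `y ⊔ z = x' ⊔ y`. -/
theorem modular_non_cancellable {L : Type*} [Lattice L] (x : L)
    (hmod : ∀ y z : L, y ≤ z → (x ⊔ y) ⊓ z = (x ⊓ z) ⊔ y)
    (hnotcanc : ¬ (∀ y z : L, x ⊔ y = x ⊔ z → x ⊓ y = x ⊓ z → y = z))
    (y z : L) (hyz : y ≠ z) (hj : x ⊔ y = x ⊔ z) (hm : x ⊓ y = x ⊓ z) :
    ∃ x' : L, x' ≤ x ∧ x' ⊔ y = x' ⊔ z ∧ x' ⊓ y = x' ⊓ z ∧ y ⊔ z = x' ⊔ y :=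
  modular_non_cancellable_general x hmod y z hj hm
end

section
/- Let L be a lattice with least element 0 and let a be an atom of L that is a neutral element. Suppose y, z ∈ L both satisfy a ≤ y and a ≤ z (i.e., y = y ⊔ a and z = z ⊔ a). If x ∈ L is such that x ⊔ y = x ⊔ z and x ⊓ y = x ⊓ z imply y = z for all such y, z lying above a, and x ⊔ a is cancellable, then x is cancellable. -/
/-!
Either `a ≤ x`, and then `x ⊔ a = x`, or `a` is disjoint from `x`. In the second case a neutral
atom is join-prime, so `x ⊔ y = x ⊔ z` forces `y` and `z` to lie both above `a` or both not
above `a`. Above `a` we cancel directly; otherwise neutrality gives `(x ⊔ a) ⊓ w = x ⊓ w` for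
`w = y, z`, and we cancel `x ⊔ a`.
-/

section Lattice

variable {L : Type*} [Lattice L]

section OrderBot

variable [OrderBot L] {a u v x w : L}

theorem IsNeutral.sup_inf_sup_inf_sup_eq_inf (hn : IsNeutral a) (hu : Disjoint a u)
    (hv : Disjoint a v) : (a ⊔ u) ⊓ (u ⊔ v) ⊓ (v ⊔ a) = u ⊓ v := by
  rw [hn u v, hu.eq_bot, inf_comm v a, hv.eq_bot, bot_sup_eq, sup_bot_eq]

theorem IsNeutral.le_or_le_of_le_sup (hn : IsNeutral a) (ha : IsAtom a) (h : a ≤ u ⊔ v) :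
    a ≤ u ∨ a ≤ v := by
  by_contra! hneither
  obtain ⟨hu, hv⟩ := hneither
  have hmedian := hn.sup_inf_sup_inf_sup_eq_inf (ha.not_le_iff_disjoint.mp hu)
    (ha.not_le_iff_disjoint.mp hv)
  have hle : a ≤ u ⊓ v := hmedian ▸ le_inf (le_inf le_sup_left h) le_sup_right
  exact hu (hle.trans inf_le_left)

theorem IsNeutral.sup_inf_eq_inf (hn : IsNeutral a) (ha : IsAtom a) (hx : ¬a ≤ x)
    (hw : ¬a ≤ w) : (x ⊔ a) ⊓ w = x ⊓ w := by
  have hmedian := hn.sup_inf_sup_inf_sup_eq_inf (ha.not_le_iff_disjoint.mp hw)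
    (ha.not_le_iff_disjoint.mp hx)
  refine le_antisymm ?_ (inf_le_inf_right w le_sup_left)
  calc (x ⊔ a) ⊓ w ≤ (a ⊔ w) ⊓ (w ⊔ x) ⊓ (x ⊔ a) :=
        le_inf (le_inf (inf_le_right.trans le_sup_right) (inf_le_right.trans le_sup_left))
          inf_le_left
    _ = x ⊓ w := by rw [hmedian, inf_comm]

end OrderBot

end Lattice

/-- If `a` is a neutral atom, `x` cancels among elements lying above `a`,
and `x ⊔ a` is cancellable, then `x` is cancellable. -/
theorem cancellable_of_cancel_above_atom {L : Type*} [Lattice L] [OrderBot L] (a : L)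
    (hatom : IsAtom a)
    (hneutral : ∀ y z : L,
      (a ⊔ y) ⊓ (y ⊔ z) ⊓ (z ⊔ a) = (a ⊓ y) ⊔ (y ⊓ z) ⊔ (z ⊓ a))
    (x : L)
    (habove : ∀ y z : L, a ≤ y → a ≤ z → x ⊔ y = x ⊔ z → x ⊓ y = x ⊓ z → y = z)
    (hja : ∀ y z : L, (x ⊔ a) ⊔ y = (x ⊔ a) ⊔ z → (x ⊔ a) ⊓ y = (x ⊔ a) ⊓ z → y = z) :
    ∀ y z : L, x ⊔ y = x ⊔ z → x ⊓ y = x ⊓ z → y = z := by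
  have hn : IsNeutral a := hneutral
  intro y z hsup hinf
  by_cases hax : a ≤ x
  · rw [sup_eq_left.mpr hax] at hja
    exact hja y z hsup hinf
  have hle_of_sup_eq {u v : L} (huv : x ⊔ u = x ⊔ v) (hu : a ≤ u) : a ≤ v :=
    (hn.le_or_le_of_le_sup hatom (huv ▸ le_sup_of_le_right hu)).resolve_left hax
  by_cases hay : a ≤ y
  · exact habove y z hay (hle_of_sup_eq hsup hay) hsup hinf
  have haz : ¬a ≤ z := fun haz => hay (hle_of_sup_eq hsup.symm haz)
  refine hja y z (by rw [sup_right_comm, hsup, sup_right_comm]) ?_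
  rw [hn.sup_inf_eq_inf hatom hax hay, hn.sup_inf_eq_inf hatom hax haz, hinf]
end

section
/- Let S be an epigroup and x ∈ S. If S satisfies x² = x^p · x̄^q for some integers p ≥ 0 and q ≥ 1 with p ≤ q, then x² = x^ω · x̄^(q−p), and in particular x² is a group element of S. -/
/-- `spow x n = x ^ (n + 1)`: positive powers in a semigroup. -/
def spow {S : Type*} [Semigroup S] (x : S) : ℕ → S
  | 0 => x
  | n + 1 => spow x n * x

/-- `x` lies in a subgroup of `S` whose identity element is `e`. -/
def IsInSubgroupWithUnit {S : Type*} [Semigroup S] (e x : S) : Prop :=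
  e * e = e ∧ x * e = x ∧ e * x = x ∧
    ∃ y : S, x * y = e ∧ y * x = e ∧ e * y = y ∧ y * e = y

/-- `x` is a group element: it lies in some subgroup of `S`. -/
def IsGroupElement {S : Type*} [Semigroup S] (x : S) : Prop :=
  ∃ e : S, IsInSubgroupWithUnit e x

/-- An epigroup: a semigroup equipped with the pseudoinversion operation.
`pinv x` is the pseudoinverse of `x`; the axioms are Shevrin's characterization:
`x x̄ = x̄ x`, `x̄ x x̄ = x̄`, and `x^ω = x x̄` absorbs some power of `x`
(equivalently, some power of `x` lies in a subgroup with unit `x x̄`). -/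
class Epigroup (S : Type*) extends Semigroup S where
  pinv : S → S
  mul_pinv_comm : ∀ x : S, x * pinv x = pinv x * x
  pinv_mul_pinv : ∀ x : S, pinv x * x * pinv x = pinv x
  pow_absorb : ∀ x : S, ∃ n : ℕ, spow x n * (x * pinv x) = spow x n

open Epigroup

/-- `npowMul x p y = x ^ p * y`, where `x ^ 0 * y` is interpreted as `y`. -/
def npowMul {S : Type*} [Semigroup S] (x : S) : ℕ → S → S
  | 0, y => y
  | p + 1, y => x * npowMul x p y

/-- `mulNpow y x p = y * x ^ p`, where `y * x ^ 0` is interpreted as `y`. -/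
def mulNpow {S : Type*} [Semigroup S] (y x : S) : ℕ → S
  | 0 => y
  | p + 1 => mulNpow y x p * x

/-! `x̄` and `x^ω = x x̄` lie in the subgroup with identity `x^ω`, and `x · x^ω x̄^(n+1) = x^ω x̄^n`.
So each factor `x` of `x^p` cancels one factor of `x̄^q = x^ω x̄^q`, leaving `x^ω x̄^(q-p)`, which lies in
that subgroup. -/

section Semigroup

variable {S : Type*} [Semigroup S] {e : S}

lemma isInSubgroupWithUnit_self (he : IsIdempotentElem e) : IsInSubgroupWithUnit e e :=
  ⟨he, he, he, e, he, he, he, he⟩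

lemma IsInSubgroupWithUnit.mul {a c : S} (ha : IsInSubgroupWithUnit e a)
    (hc : IsInSubgroupWithUnit e c) : IsInSubgroupWithUnit e (a * c) := by
  obtain ⟨hee, hae, hea, a', haa', ha'a, hea', ha'e⟩ := ha
  obtain ⟨-, hce, hec, c', hcc', hc'c, hec', hc'e⟩ := hc
  refine ⟨hee, ?_, ?_, c' * a', ?_, ?_, ?_, ?_⟩
  · rw [mul_assoc, hce]
  · rw [← mul_assoc, hea]
  · rw [mul_assoc, ← mul_assoc c, hcc', hea', haa']
  · rw [mul_assoc, ← mul_assoc a', ha'a, hec, hc'c]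
  · rw [← mul_assoc, hec']
  · rw [mul_assoc, ha'e]

lemma IsInSubgroupWithUnit.mulNpow {y x : S} (hy : IsInSubgroupWithUnit e y)
    (hx : IsInSubgroupWithUnit e x) (n : ℕ) : IsInSubgroupWithUnit e (mulNpow y x n) := by
  induction n with
  | zero => exact hy
  | succ n ih => exact ih.mul hx

end Semigroup

namespace Epigroup

variable {S : Type*} [Epigroup S] (x : S)

lemma mul_pinv_mul_pinv : x * pinv x * pinv x = pinv x := by
  rw [mul_pinv_comm]
  exact pinv_mul_pinv x

lemma pinv_mul_mul_pinv : pinv x * (x * pinv x) = pinv x := by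
  rw [← mul_assoc]
  exact pinv_mul_pinv x

lemma isIdempotentElem_mul_pinv : IsIdempotentElem (x * pinv x) := by
  rw [IsIdempotentElem, mul_assoc, pinv_mul_mul_pinv]

lemma isInSubgroupWithUnit_pinv : IsInSubgroupWithUnit (x * pinv x) (pinv x) := by
  have he := isIdempotentElem_mul_pinv x
  refine ⟨he, pinv_mul_mul_pinv x, mul_pinv_mul_pinv x, x * (x * pinv x), ?_, ?_, ?_, ?_⟩
  · rw [← mul_assoc, ← mul_pinv_comm, he]
  · rw [mul_assoc, mul_pinv_mul_pinv]
  · rw [← mul_assoc, mul_assoc x, ← mul_pinv_comm, mul_assoc, he]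
  · rw [mul_assoc, he]

lemma spow_pinv_eq_mulNpow (n : ℕ) :
    spow (pinv x) n = mulNpow (x * pinv x) (pinv x) (n + 1) := by
  induction n with
  | zero => exact (mul_pinv_mul_pinv x).symm
  | succ n ih => rw [spow, ih]; rfl

lemma mul_mulNpow_succ (n : ℕ) :
    x * mulNpow (x * pinv x) (pinv x) (n + 1) = mulNpow (x * pinv x) (pinv x) n := by
  induction n with
  | zero =>
    show x * (x * pinv x * pinv x) = x * pinv x
    rw [mul_pinv_mul_pinv]
  | succ n ih =>
    show x * (mulNpow (x * pinv x) (pinv x) (n + 1) * pinv x) = _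
    rw [← mul_assoc, ih]
    rfl

lemma npowMul_mulNpow_add (p m : ℕ) :
    npowMul x p (mulNpow (x * pinv x) (pinv x) (p + m)) = mulNpow (x * pinv x) (pinv x) m := by
  induction p generalizing m with
  | zero => rw [Nat.zero_add, npowMul]
  | succ p ih => rw [npowMul, Nat.add_right_comm, Nat.add_assoc, ih, mul_mulNpow_succ]

end Epigroup

/-- If `x² = x^p·x̄^q` with `0 ≤ p ≤ q`, `q ≥ 1`, then `x² = x^ω·x̄^(q-p)` and `x²`
is a group element. -/
theorem sq_eq_omega_pinv_pow {S : Type*} [Epigroup S] (x : S) (p q : ℕ)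
    (hq : 1 ≤ q) (hpq : p ≤ q)
    (h : x * x = npowMul x p (spow (pinv x) (q - 1))) :
    x * x = mulNpow (x * pinv x) (pinv x) (q - p) ∧ IsGroupElement (x * x) := by
  have hsq : x * x = mulNpow (x * pinv x) (pinv x) (q - p) := by
    rw [h, spow_pinv_eq_mulNpow, Nat.sub_add_cancel hq, ← Nat.add_sub_cancel' hpq,
      npowMul_mulNpow_add, Nat.add_sub_cancel_left]
  refine ⟨hsq, x * pinv x, hsq ▸ ?_⟩
  exact (isInSubgroupWithUnit_self (isIdempotentElem_mul_pinv x)).mulNpow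
    (isInSubgroupWithUnit_pinv x) (q - p)
end

section
/- Let L be a lattice with 0, a an atom and neutral element of L, and x a cancellable element of L. Then x ⊓ a ∈ {0, a}, and in either case x ⊔ a is cancellable. -/
/-!
A neutral element `a` is cancellable: `y ≤ (a ⊔ y) ⊓ (y ⊔ z) ⊓ (z ⊔ a)` and the median
identity turns this into `y ≤ (a ⊓ y) ⊔ (y ⊓ z) ⊔ (z ⊓ a) ≤ z` as soon as `a ⊔ y = a ⊔ z` and
`a ⊓ y = a ⊓ z`. Now let `x ⊔ a` have the same joins and meets with `y` and `z`. Meeting with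
`a` and with `x` gives `a ⊓ y = a ⊓ z` and `x ⊓ y = x ⊓ z`; the median identity also gives
`x ⊓ (a ⊔ y) = x ⊓ (a ⊔ x ⊓ y)`, so `x ⊓ (a ⊔ y) = x ⊓ (a ⊔ z)`, while
`x ⊔ (a ⊔ y) = x ⊔ (a ⊔ z)`. Cancelling `x` and then `a` yields `y = z`.
-/

section Lattice

variable {L : Type*} [Lattice L]

theorem inf_eq_inf_of_le_of_inf_eq {b c y z : L} (hbc : b ≤ c) (h : c ⊓ y = c ⊓ z) :
    b ⊓ y = b ⊓ z := by
  rw [← inf_eq_left.2 hbc, inf_assoc, inf_assoc, h]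

namespace IsNeutral

variable {a : L}

theorem le_of_sup_eq_of_inf_eq (ha : IsNeutral a) {y z : L} (hs : a ⊔ y = a ⊔ z)
    (hi : a ⊓ y = a ⊓ z) : y ≤ z :=
  calc y ≤ (a ⊔ y) ⊓ (y ⊔ z) ⊓ (z ⊔ a) :=
        le_inf (le_inf le_sup_right le_sup_left) (by rw [sup_comm z, ← hs]; exact le_sup_right)
    _ = (a ⊓ y) ⊔ (y ⊓ z) ⊔ (z ⊓ a) := ha y z
    _ ≤ z := sup_le (sup_le (hi ▸ inf_le_right) inf_le_right) inf_le_left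

theorem inf_sup_le_sup_inf (ha : IsNeutral a) (x y : L) : x ⊓ (a ⊔ y) ≤ a ⊔ x ⊓ y :=
  calc x ⊓ (a ⊔ y) ≤ (a ⊔ x) ⊓ (x ⊔ y) ⊓ (y ⊔ a) :=
        le_inf (le_inf (inf_le_left.trans le_sup_right) (inf_le_left.trans le_sup_left))
          (inf_le_right.trans (sup_comm a y).le)
    _ = (a ⊓ x) ⊔ (x ⊓ y) ⊔ (y ⊓ a) := ha x y
    _ ≤ a ⊔ x ⊓ y :=
        sup_le (sup_le (inf_le_left.trans le_sup_left) le_sup_right) (inf_le_right.trans le_sup_left)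

theorem inf_sup_eq_inf_sup_inf (ha : IsNeutral a) (x y : L) : x ⊓ (a ⊔ y) = x ⊓ (a ⊔ x ⊓ y) :=
  le_antisymm (le_inf inf_le_left (ha.inf_sup_le_sup_inf x y))
    (inf_le_inf_left x (sup_le_sup_left inf_le_right a))

end IsNeutral

theorem IsCancellable.sup_of_isNeutral {x a : L} (hx : IsCancellable x) (ha : IsNeutral a) :
    IsCancellable (x ⊔ a) := by
  intro y z hs hi
  have ha_inf : a ⊓ y = a ⊓ z := inf_eq_inf_of_le_of_inf_eq le_sup_right hi
  have hx_inf : x ⊓ y = x ⊓ z := inf_eq_inf_of_le_of_inf_eq le_sup_left hi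
  have hx_inf_sup : x ⊓ (a ⊔ y) = x ⊓ (a ⊔ z) := by
    rw [ha.inf_sup_eq_inf_sup_inf, hx_inf, ← ha.inf_sup_eq_inf_sup_inf]
  have hx_sup_sup : x ⊔ (a ⊔ y) = x ⊔ (a ⊔ z) := by
    simpa only [sup_assoc] using hs
  exact ha.isCancellable y z (hx _ _ hx_sup_sup hx_inf_sup) ha_inf

end Lattice

/-- For a neutral atom `a` and a cancellable element `x`, `x ⊓ a ∈ {0, a}` and
`x ⊔ a` is cancellable. -/
theorem meet_atom_and_join_cancellable {L : Type*} [Lattice L] [OrderBot L] (a : L)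
    (hatom : IsAtom a)
    (hneutral : ∀ y z : L,
      (a ⊔ y) ⊓ (y ⊔ z) ⊓ (z ⊔ a) = (a ⊓ y) ⊔ (y ⊓ z) ⊔ (z ⊓ a))
    (x : L)
    (hcanc : ∀ y z : L, x ⊔ y = x ⊔ z → x ⊓ y = x ⊓ z → y = z) :
    (x ⊓ a = ⊥ ∨ x ⊓ a = a) ∧
      (∀ y z : L, (x ⊔ a) ⊔ y = (x ⊔ a) ⊔ z → (x ⊔ a) ⊓ y = (x ⊔ a) ⊓ z → y = z) :=
  ⟨hatom.le_iff.mp inf_le_right, IsCancellable.sup_of_isNeutral hcanc hneutral⟩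
end
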